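/- arXiv:math-ph/0307032 — 5 statements merged into one kernel-verified Lean document; each statement's English description precedes it below -/
import Mathlib

section
/- For any 2×2 matrices A and B over a commutative ring with det(A) = det(B) = 1, the Fricke trace identity holds: tr(A·B·A⁻¹·B⁻¹) + 2 = tr(A)² + tr(B)² + tr(AB)² − tr(A)·tr(B)·tr(AB). -/
/-- Fricke trace identity for `2 × 2` matrices of determinant one over a commutative
ring: `tr(ABA⁻¹B⁻¹) + 2 = tr(A)² + tr(B)² + tr(AB)² − tr(A)·tr(B)·tr(AB)`. -/
theorem fricke_trace_identity {R : Type*} [CommRing R]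
    (A B : Matrix (Fin 2) (Fin 2) R) (hA : A.det = 1) (hB : B.det = 1) :
    Matrix.trace (A * B * A⁻¹ * B⁻¹) + 2 =
      (Matrix.trace A) ^ 2 + (Matrix.trace B) ^ 2 + (Matrix.trace (A * B)) ^ 2 -
        Matrix.trace A * Matrix.trace B * Matrix.trace (A * B) := by
  rw [Matrix.inv_def, Matrix.inv_def, hA, hB]
  rw [Matrix.det_fin_two] at hA hB
  simp only [Ring.inverse_one, one_smul]
  simp [Matrix.trace, Matrix.mul_apply, Fin.sum_univ_two, Matrix.adjugate_fin_two,
    Matrix.diag]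
  linear_combination (B 0 0 ^ 2 + 2 * B 0 0 * B 1 1 + B 1 1 ^ 2 - 2) * hA +
    (A 0 0 ^ 2 + 2 * A 0 1 * A 1 0 + A 1 1 ^ 2) * hB
end

section
/- If A and B are 2×2 real matrices with det(A) = det(B) = 1 and the commutator satisfies tr(A·B·A⁻¹·B⁻¹) = −2, then the triple of traces satisfies the Markoff-type equation tr(A)² + tr(B)² + tr(AB)² = tr(A)·tr(B)·tr(AB). -/
/-- If `A, B ∈ SL(2, ℝ)` and the commutator `A B A⁻¹ B⁻¹` has trace `−2`, then the
traces satisfy the classical Markoff equation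
`tr(A)² + tr(B)² + tr(AB)² = tr(A)·tr(B)·tr(AB)`. -/
theorem parabolic_commutator_markoff (A B : Matrix (Fin 2) (Fin 2) ℝ)
    (hA : A.det = 1) (hB : B.det = 1)
    (hL : Matrix.trace (A * B * A⁻¹ * B⁻¹) = -2) :
    (Matrix.trace A) ^ 2 + (Matrix.trace B) ^ 2 + (Matrix.trace (A * B)) ^ 2 =
      Matrix.trace A * Matrix.trace B * Matrix.trace (A * B) := by
  have hAinv : A⁻¹ = A.adjugate := by
    rw [Matrix.inv_def, hA]; simp
  have hBinv : B⁻¹ = B.adjugate := by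
    rw [Matrix.inv_def, hB]; simp
  rw [hAinv, hBinv] at hL
  rw [Matrix.det_fin_two] at hA hB
  simp only [Matrix.trace_fin_two, Matrix.mul_apply, Fin.sum_univ_two,
    Matrix.adjugate_fin_two, Matrix.cons_val_zero, Matrix.cons_val_one,
    Matrix.head_cons, Matrix.head_fin_const, Matrix.cons_val', Matrix.cons_val_fin_one,
    Matrix.empty_val', Matrix.of_apply] at hL ⊢
  linear_combination hL + (2 - (B 0 0 + B 1 1) ^ 2) * hA +
    (-(A 0 0) ^ 2 - 2 * A 0 1 * A 1 0 - (A 1 1) ^ 2) * hB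
end

section
/- For all integers a, u, m₁ with u < 0, the two triples (−u, m₁, m₁) and ((a+1)m₁², m₁, m₁) are solutions of the equation x² − y² − z² = (a+1)xyz + (u(a+1) − 2)yz − ux. In particular this equation has infinitely many fundamental solutions. -/
/-- For all integers `a, u, m₁` with `u < 0`, both `(−u, m₁, m₁)` and
`((a+1)m₁², m₁, m₁)` solve `x² − y² − z² = (a+1)xyz + (u(a+1) − 2)yz − ux`;
in particular this equation has infinitely many solutions. -/
theorem exceptional_family_solutions (a u : ℤ) (hu : u < 0) :
    (∀ m₁ : ℤ,
      (-u) ^ 2 - m₁ ^ 2 - m₁ ^ 2 =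
        (a + 1) * (-u) * m₁ * m₁ + (u * (a + 1) - 2) * m₁ * m₁ - u * (-u) ∧
      ((a + 1) * m₁ ^ 2) ^ 2 - m₁ ^ 2 - m₁ ^ 2 =
        (a + 1) * ((a + 1) * m₁ ^ 2) * m₁ * m₁ + (u * (a + 1) - 2) * m₁ * m₁ -
          u * ((a + 1) * m₁ ^ 2)) ∧
    {p : ℤ × ℤ × ℤ |
      p.1 ^ 2 - p.2.1 ^ 2 - p.2.2 ^ 2 =
        (a + 1) * p.1 * p.2.1 * p.2.2 + (u * (a + 1) - 2) * p.2.1 * p.2.2 -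
          u * p.1}.Infinite := by
  constructor
  · intro m₁; constructor <;> ring
  · apply Set.infinite_of_injective_forall_mem
      (f := fun m : ℤ => ((-u, m, m) : ℤ × ℤ × ℤ))
    · intro x y h
      simpa using congrArg (fun p => p.2.1) h
    · intro m
      simp only [Set.mem_setOf_eq]
      ring
end

section
/- For all integers b, m₂, k, set m₁ = b·m₂ + k, m = m₁² + m₂², and u = (b−1)·m₂² − (b−1)·m₂·k − k² − 1. Then m² + m₁² + m₂² = (b+1)·m·m₁·m₂ − u·m. -/
/-- For all integers `b, m₂, k`, setting `m₁ = b·m₂ + k`, `m = m₁² + m₂²` and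
`u = (b−1)m₂² − (b−1)m₂k − k² − 1`, one has
`m² + m₁² + m₂² = (b+1)·m·m₁·m₂ − u·m` (a Cohn triple for `M⁺⁺(b,0,u)`). -/
theorem cohn_triple_identity (b m₂ k : ℤ) :
    ((b * m₂ + k) ^ 2 + m₂ ^ 2) ^ 2 + (b * m₂ + k) ^ 2 + m₂ ^ 2 =
      (b + 1) * ((b * m₂ + k) ^ 2 + m₂ ^ 2) * (b * m₂ + k) * m₂ -
        ((b - 1) * m₂ ^ 2 - (b - 1) * m₂ * k - k ^ 2 - 1) *
          ((b * m₂ + k) ^ 2 + m₂ ^ 2) := by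
  ring
end

section
/- Let A = [[11,3],[7,2]] and B = [[37,11],[10,3]] in SL(2,ℤ). Then tr(A·B·A⁻¹·B⁻¹) = 1767, and the matrix U = B⁻¹·A satisfies U² = −I. Consequently the images of A and B in PSL(2,ℤ) satisfy a nontrivial relation. -/
/-- For `A = [[11,3],[7,2]]` and `B = [[37,11],[10,3]]` in `SL(2, ℤ)`, the
commutator has trace `1767` and `U = B⁻¹A` satisfies `U² = −I`, a nontrivial
relation between (the images of) `A` and `B`. -/
theorem hyperbolic_torus_example :
    (!![11, 3; 7, 2] : Matrix (Fin 2) (Fin 2) ℤ).det = 1 ∧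
    (!![37, 11; 10, 3] : Matrix (Fin 2) (Fin 2) ℤ).det = 1 ∧
    Matrix.trace ((!![11, 3; 7, 2] : Matrix (Fin 2) (Fin 2) ℤ) * !![37, 11; 10, 3] *
      (!![11, 3; 7, 2] : Matrix (Fin 2) (Fin 2) ℤ)⁻¹ *
      (!![37, 11; 10, 3] : Matrix (Fin 2) (Fin 2) ℤ)⁻¹) = 1767 ∧
    ((!![37, 11; 10, 3] : Matrix (Fin 2) (Fin 2) ℤ)⁻¹ * !![11, 3; 7, 2]) ^ 2 =
      -(1 : Matrix (Fin 2) (Fin 2) ℤ) := by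
  have hA : (!![11, 3; 7, 2] : Matrix (Fin 2) (Fin 2) ℤ)⁻¹ = !![2, -3; -7, 11] := by
    rw [Matrix.inv_def]
    simp [Matrix.det_fin_two, Matrix.adjugate_fin_two]
  have hB : (!![37, 11; 10, 3] : Matrix (Fin 2) (Fin 2) ℤ)⁻¹ = !![3, -11; -10, 37] := by
    rw [Matrix.inv_def]
    simp [Matrix.det_fin_two, Matrix.adjugate_fin_two]
  refine ⟨by simp [Matrix.det_fin_two], by simp [Matrix.det_fin_two], ?_, ?_⟩
  · rw [hA, hB]
    simp [Matrix.mul_fin_two, Matrix.trace_fin_two]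
  · rw [hB, sq]
    ext i j
    fin_cases i <;> fin_cases j <;>
      simp [Matrix.mul_apply, Fin.sum_univ_succ, Matrix.one_apply]
end
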